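/- For any weighted graph G, any positive integers s and t, and any vertex x_i ∈ V(G), one has π_{st}(G, x_i) = π_t(G_{i,s}', x'), where G_{i,s}' is obtained from G by adding a new vertex x' joined to x_i by a single edge of weight s. -/

import Mathlib

open scoped BigOperators

/-- A weighted graph: a finite simple graph together with a symmetric weight
function assigning a positive integer to each edge. -/
structure WeightedGraph (V : Type*) where
  toSimpleGraph : SimpleGraph V
  w : V → V → ℕ
  w_symm : ∀ u v, w u v = w v u
  w_pos : ∀ u v, toSimpleGraph.Adj u v → 0 < w u v

/-- A weighted pebbling move along the edge `(u, v)`: remove `w u v` pebbles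
from `u` and add one pebble on the adjacent vertex `v`. -/
def WPebMove {V : Type*} [DecidableEq V] (G : WeightedGraph V) (D D' : V → ℕ) : Prop :=
  ∃ u v, G.toSimpleGraph.Adj u v ∧ G.w u v ≤ D u ∧
    D' = fun z => if z = u then D u - G.w u v else if z = v then D v + 1 else D z

/-- `D'` is reachable from `D` in the weighted graph `G`: some sequence of
weighted pebbling moves starting at `D` produces a distribution containing `D'`. -/
def WReaches {V : Type*} [DecidableEq V] (G : WeightedGraph V) (D D' : V → ℕ) : Prop :=
  ∃ D'', Relation.ReflTransGen (WPebMove G) D D'' ∧ ∀ v, D' v ≤ D'' v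

/-- Total number of pebbles of a distribution. -/
def pebTotal {V : Type*} [Fintype V] (D : V → ℕ) : ℕ := ∑ v, D v

/-- The weighted pebbling number of a set `S` of target distributions. -/
noncomputable def wpebSet {V : Type*} [Fintype V] [DecidableEq V] (G : WeightedGraph V)
    (S : Set (V → ℕ)) : ℕ∞ :=
  sInf {N : ℕ∞ | ∀ D₀ : V → ℕ, N ≤ (pebTotal D₀ : ℕ∞) → ∀ D ∈ S, WReaches G D₀ D}

/-- The weighted pebbling number of a single target distribution. -/
noncomputable def wpeb {V : Type*} [Fintype V] [DecidableEq V] (G : WeightedGraph V)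
    (D : V → ℕ) : ℕ∞ :=
  wpebSet G {D}

/-- The distribution with `t` pebbles on `v` and none elsewhere. -/
def unitDist {V : Type*} [DecidableEq V] (t : ℕ) (v : V) : V → ℕ :=
  fun w => if w = v then t else 0

/-- The weighted graph `G_{i,s}'` obtained from `G` by adding a single new
vertex `none` joined to `xᵢ` by a single edge of weight `s`. -/
def WeightedGraph.extend {V : Type*} (G : WeightedGraph V) (xi : V)
    (s : ℕ) (hs : 0 < s) : WeightedGraph (Option V) where
  toSimpleGraph :=
    { Adj := fun a b =>
        (∃ u v, a = some u ∧ b = some v ∧ G.toSimpleGraph.Adj u v) ∨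
        (a = some xi ∧ b = none) ∨ (a = none ∧ b = some xi)
      symm := by
        refine ⟨?_⟩; rintro a b (⟨u, v, rfl, rfl, h⟩ | ⟨rfl, rfl⟩ | ⟨rfl, rfl⟩)
        · exact Or.inl ⟨v, u, rfl, rfl, h.symm⟩
        · exact Or.inr (Or.inr ⟨rfl, rfl⟩)
        · exact Or.inr (Or.inl ⟨rfl, rfl⟩)
      loopless := by
        refine ⟨?_⟩; rintro a (⟨u, v, rfl, h1, hadj⟩ | ⟨h1, h2⟩ | ⟨h1, h2⟩) <;> simp_all }
  w := fun a b => match a, b with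
    | some u, some v => G.w u v
    | _, _ => s
  w_symm := by
    rintro (_ | u) (_ | v) <;> simp [G.w_symm]
  w_pos := by
    rintro a b (⟨u, v, rfl, rfl, hadj⟩ | ⟨rfl, rfl⟩ | ⟨rfl, rfl⟩)
    · exact G.w_pos u v hadj
    · exact hs
    · exact hs

/-- The map `π` sending a distribution on `G_{i,s}' × H` to a distribution on
`G × H`, replacing each pebble on `(x', y)` by `s` pebbles on `(xᵢ, y)`. -/
def wprojDist {V W : Type*} [DecidableEq V] (xi : V) (s : ℕ)
    (D : Option V × W → ℕ) : V × W → ℕ :=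
  fun p =>
    if p.1 = xi then D (some p.1, p.2) + s * D (none, p.2) else D (some p.1, p.2)


/-! A pebble on the new vertex `x'` is worth exactly `s` pebbles on `xᵢ`. Contracting a
distribution on `G_{i,s}'` to `G` (each pebble on `x'` becomes `s` pebbles on `xᵢ`) turns every
move either into a move of `G` or into a step that does not increase the contraction, so reaching
`t` pebbles on `x'` yields `s t` pebbles on `xᵢ`. Conversely, given `k < t` pebbles on `x'`, put
them on `xᵢ` instead: a solution in `G` for `s t` pebbles on `xᵢ`, run without those `k` borrowed
pebbles, still ends with at least `s t - k ≥ s (t - k)` pebbles on `xᵢ`, and these are moved across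
the edge of weight `s`. -/

open Relation

section Total

variable {V : Type*} [Fintype V]

theorem pebTotal_add (D E : V → ℕ) : pebTotal (D + E) = pebTotal D + pebTotal E :=
  Finset.sum_add_distrib

theorem le_pebTotal (D : V → ℕ) (v : V) : D v ≤ pebTotal D :=
  Finset.single_le_sum (fun _ _ => Nat.zero_le _) (Finset.mem_univ v)

theorem pebTotal_unitDist [DecidableEq V] (k : ℕ) (v : V) : pebTotal (unitDist k v) = k := by
  simp [pebTotal, unitDist]

end Total

section Reachability

variable {V : Type*} [DecidableEq V] (G : WeightedGraph V)

theorem WPebMove.exists_of_le {C' M' C : V → ℕ} (h : WPebMove G C' M') (hle : C' ≤ C) :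
    ∃ M, WPebMove G C M ∧ M' ≤ M := by
  obtain ⟨u, v, hadj, hw, rfl⟩ := h
  refine ⟨_, ⟨u, v, hadj, hw.trans (hle u), rfl⟩, fun z => ?_⟩
  have hu : C' u ≤ C u := hle u
  have hz : C' z ≤ C z := hle z
  dsimp only
  split_ifs <;> subst_vars <;> omega

theorem exists_reflTransGen_of_le {C' E' C : V → ℕ} (h : ReflTransGen (WPebMove G) C' E')
    (hle : C' ≤ C) : ∃ E, ReflTransGen (WPebMove G) C E ∧ E' ≤ E := by
  induction h with
  | refl => exact ⟨C, .refl, hle⟩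
  | tail _ hstep ih =>
    obtain ⟨E₁, hE₁, hle₁⟩ := ih
    obtain ⟨E, hE, hle⟩ := hstep.exists_of_le G hle₁
    exact ⟨E, hE₁.tail hE, hle⟩

variable [Fintype V]

theorem WPebMove.exists_of_le_add {C' M' C F : V → ℕ} (h : WPebMove G C' M')
    (hle : C' ≤ C + F) :
    ∃ M Fm, ReflTransGen (WPebMove G) C M ∧ M' ≤ M + Fm ∧ pebTotal Fm ≤ pebTotal F := by
  obtain ⟨u, v, hadj, hw, rfl⟩ := h
  have huv : u ≠ v := hadj.ne
  have hu : C' u ≤ C u + F u := hle u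
  by_cases hcu : G.w u v ≤ C u
  · refine ⟨_, F, .single ⟨u, v, hadj, hcu, rfl⟩, fun z => ?_, le_rfl⟩
    have hz : C' z ≤ C z + F z := hle z
    simp only [Pi.add_apply]
    split_ifs <;> subst_vars <;> omega
  -- the `G.w u v - C u` pebbles missing on `u` are taken from `F`, which gets the new pebble on `v`
  set Fm : V → ℕ := fun z => if z = u then F u - (G.w u v - C u) else if z = v then F v + 1 else F z
  have hFm : Fm + unitDist (G.w u v - C u) u = F + unitDist 1 v := by
    funext z
    simp only [Fm, unitDist, Pi.add_apply]
    split_ifs <;> subst_vars <;> first | omega | exact absurd rfl huv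
  refine ⟨C, Fm, .refl, fun z => ?_, ?_⟩
  · have hz : C' z ≤ C z + F z := hle z
    simp only [Fm, Pi.add_apply]
    split_ifs <;> subst_vars <;> omega
  · have := congrArg pebTotal hFm
    simp only [pebTotal_add, pebTotal_unitDist] at this
    omega

theorem exists_reflTransGen_of_le_add {C' E' C F : V → ℕ} (h : ReflTransGen (WPebMove G) C' E')
    (hle : C' ≤ C + F) :
    ∃ E F', ReflTransGen (WPebMove G) C E ∧ E' ≤ E + F' ∧ pebTotal F' ≤ pebTotal F := by
  induction h with
  | refl => exact ⟨C, F, .refl, hle, le_rfl⟩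
  | tail _ hstep ih =>
    obtain ⟨E₁, F₁, hE₁, hle₁, hF₁⟩ := ih
    obtain ⟨E, F', hE, hle', hF'⟩ := hstep.exists_of_le_add G hle₁
    exact ⟨E, F', hE₁.trans hE, hle', hF'.trans hF₁⟩

end Reachability

section Extension

variable {V : Type*} (G : WeightedGraph V) (xi : V) {s : ℕ} (hs : 0 < s)

@[simp]
theorem WeightedGraph.extend_w_some_some (u v : V) :
    (G.extend xi s hs).w (some u) (some v) = G.w u v :=
  rfl

@[simp]
theorem WeightedGraph.extend_w_some_none (u : V) : (G.extend xi s hs).w (some u) none = s :=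
  rfl

@[simp]
theorem WeightedGraph.extend_w_none_some (v : V) : (G.extend xi s hs).w none (some v) = s :=
  rfl

def extendDist (k : ℕ) (D : V → ℕ) : Option V → ℕ := fun z => z.elim k D

theorem extendDist_none_comp_some (D : Option V → ℕ) : extendDist (D none) (D ∘ some) = D := by
  funext z
  cases z <;> rfl

theorem pebTotal_extendDist [Fintype V] (k : ℕ) (D : V → ℕ) :
    pebTotal (extendDist k D) = k + pebTotal D := by
  simp [pebTotal, extendDist, Fintype.sum_option]

variable [DecidableEq V]

def contractDist (s : ℕ) (D : Option V → ℕ) : V → ℕ := D ∘ some + unitDist (s * D none) xi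

theorem contractDist_extendDist_zero (D : V → ℕ) : contractDist xi s (extendDist 0 D) = D := by
  funext v
  simp [contractDist, extendDist, unitDist]

theorem WPebMove.extendDist {A B : V → ℕ} (k : ℕ) (h : WPebMove G A B) :
    WPebMove (G.extend xi s hs) (extendDist k A) (extendDist k B) := by
  obtain ⟨u, v, hadj, hw, rfl⟩ := h
  refine ⟨some u, some v, .inl ⟨u, v, rfl, rfl, hadj⟩, hw, ?_⟩
  funext z
  cases z <;> simp [_root_.extendDist]

theorem WPebMove.contractDist {A B : Option V → ℕ} (h : WPebMove (G.extend xi s hs) A B) :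
    contractDist xi s B ≤ contractDist xi s A ∨
      WPebMove G (contractDist xi s A) (contractDist xi s B) := by
  obtain ⟨u, v, hadj, hw, rfl⟩ := h
  rcases hadj with ⟨a, b, rfl, rfl, hab⟩ | ⟨rfl, rfl⟩ | ⟨rfl, rfl⟩
  · right
    simp only [WeightedGraph.extend_w_some_some] at hw
    refine ⟨a, b, hab, hw.trans (Nat.le_add_right _ _), ?_⟩
    funext z
    have hab' := hab.ne
    simp only [_root_.contractDist, unitDist, Pi.add_apply, Function.comp_apply,
      Option.some.injEq, reduceCtorEq, if_false, WeightedGraph.extend_w_some_some]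
    split_ifs <;> subst_vars <;> simp_all <;> omega
  · left
    simp only [WeightedGraph.extend_w_some_none] at hw
    intro z
    simp only [_root_.contractDist, unitDist, Pi.add_apply, Function.comp_apply,
      Option.some.injEq, reduceCtorEq, if_false, if_true, WeightedGraph.extend_w_some_none]
    rw [Nat.mul_succ]
    split_ifs <;> subst_vars <;> omega
  · left
    simp only [WeightedGraph.extend_w_none_some] at hw
    have : 1 ≤ s * s := Nat.one_le_iff_ne_zero.mpr (Nat.mul_ne_zero hs.ne' hs.ne')
    have : s * s ≤ s * A none := Nat.mul_le_mul_left s hw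
    intro z
    simp only [_root_.contractDist, unitDist, Pi.add_apply, Function.comp_apply,
      Option.some.injEq, reduceCtorEq, if_false, if_true, WeightedGraph.extend_w_none_some]
    rw [Nat.mul_sub]
    split_ifs <;> subst_vars <;> omega

theorem Relation.ReflTransGen.extendDist {A B : V → ℕ} (k : ℕ)
    (h : ReflTransGen (WPebMove G) A B) :
    ReflTransGen (WPebMove (G.extend xi s hs)) (extendDist k A) (extendDist k B) :=
  h.lift (p := WPebMove (G.extend xi s hs)) (_root_.extendDist k)
    fun _ _ hmove => hmove.extendDist G xi hs k

theorem exists_reflTransGen_contractDist {A B : Option V → ℕ}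
    (h : ReflTransGen (WPebMove (G.extend xi s hs)) A B) :
    ∃ C, ReflTransGen (WPebMove G) (contractDist xi s A) C ∧ contractDist xi s B ≤ C := by
  induction h with
  | refl => exact ⟨_, .refl, le_rfl⟩
  | tail _ hstep ih =>
    obtain ⟨C, hC, hle⟩ := ih
    rcases hstep.contractDist G xi hs with hdecr | hmove
    · exact ⟨C, hC, hdecr.trans hle⟩
    · obtain ⟨E, hE, hEle⟩ := exists_reflTransGen_of_le G (.single hmove) hle
      exact ⟨E, hC.trans hE, hEle⟩

theorem exists_reflTransGen_extend_add_le_none (m : ℕ) {C : Option V → ℕ}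
    (hC : s * m ≤ C (some xi)) :
    ∃ C', ReflTransGen (WPebMove (G.extend xi s hs)) C C' ∧ C none + m ≤ C' none := by
  induction m generalizing C with
  | zero => exact ⟨C, .refl, le_rfl⟩
  | succ m ih =>
    rw [Nat.mul_succ] at hC
    set C₁ : Option V → ℕ :=
      fun z => if z = some xi then C (some xi) - s else if z = none then C none + 1 else C z
    have hmove : WPebMove (G.extend xi s hs) C C₁ :=
      ⟨some xi, none, .inr (.inl ⟨rfl, rfl⟩), by rw [WeightedGraph.extend_w_some_none]; omega,
        by rw [WeightedGraph.extend_w_some_none]⟩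
    obtain ⟨C', hC', hle⟩ := ih (C := C₁) (by simp only [C₁, if_true]; omega)
    simp only [C₁, reduceCtorEq, if_false, if_true] at hle
    exact ⟨C', .head hmove hC', by omega⟩

theorem wReaches_extend_of_wReaches [Fintype V] {t k : ℕ} {R : V → ℕ}
    (h : WReaches G (R + unitDist k xi) (unitDist (s * t) xi)) :
    WReaches (G.extend xi s hs) (extendDist k R) (unitDist t none) := by
  obtain ⟨E, hE, hEle⟩ := h
  obtain ⟨E₂, F, hE₂, hle, hF⟩ := exists_reflTransGen_of_le_add G hE (C := R) le_rfl
  have hxi : s * t ≤ E₂ xi + k := by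
    have h₁ := hEle xi
    have h₂ : E xi ≤ E₂ xi + F xi := hle xi
    have h₃ := (le_pebTotal F xi).trans (hF.trans_eq (pebTotal_unitDist k xi))
    simp only [unitDist, if_true] at h₁
    omega
  have hpump : s * (t - k) ≤ extendDist k E₂ (some xi) := by
    have : k ≤ s * k := Nat.le_mul_of_pos_left k hs
    rw [Nat.mul_sub]
    exact (Nat.sub_le_sub_left this _).trans (by simp only [extendDist, Option.elim_some]; omega)
  obtain ⟨C, hC, hCle⟩ := exists_reflTransGen_extend_add_le_none G xi hs (t - k) hpump
  refine ⟨C, (hE₂.extendDist G xi hs k).trans hC, fun z => ?_⟩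
  cases z with
  | none => simp only [unitDist, if_true, extendDist, Option.elim_none] at hCle ⊢; omega
  | some z => simp [unitDist]

theorem wReaches_of_wReaches_extend {t : ℕ} {D : V → ℕ}
    (h : WReaches (G.extend xi s hs) (extendDist 0 D) (unitDist t none)) :
    WReaches G D (unitDist (s * t) xi) := by
  obtain ⟨E, hE, hEle⟩ := h
  obtain ⟨C, hC, hCle⟩ := exists_reflTransGen_contractDist G xi hs hE
  rw [contractDist_extendDist_zero] at hC
  refine ⟨C, hC, fun v => (?_ : _ ≤ contractDist xi s E v).trans (hCle v)⟩
  have ht : t ≤ E none := by simpa [unitDist] using hEle none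
  simp only [unitDist, contractDist, Pi.add_apply]
  split_ifs
  · exact (Nat.mul_le_mul_left s ht).trans (Nat.le_add_left _ _)
  · exact Nat.zero_le _

end Extension

theorem weighted_st_pebbling_eq_extended_general {V : Type*} [Fintype V] [DecidableEq V]
    (G : WeightedGraph V) (s t : ℕ) (hs : 0 < s) (xi : V) :
    wpeb G (unitDist (s * t) xi)
      = wpeb (G.extend xi s hs) (unitDist t (none : Option V)) := by
  unfold wpeb wpebSet
  congr 1
  ext N
  simp only [Set.mem_ofPred_eq, Set.mem_singleton_iff, forall_eq]
  constructor
  · intro hG D hD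
    rw [← extendDist_none_comp_some D] at hD ⊢
    refine wReaches_extend_of_wReaches G xi hs (hG _ ?_)
    rwa [pebTotal_add, pebTotal_unitDist, add_comm, ← pebTotal_extendDist]
  · intro hG D hD
    refine wReaches_of_wReaches_extend G xi hs (hG _ ?_)
    rwa [pebTotal_extendDist, zero_add]

/-- `π_{st}(G, xᵢ) = π_t(G_{i,s}', x')` for weighted graphs. -/
theorem weighted_st_pebbling_eq_extended {V : Type*} [Fintype V] [DecidableEq V]
    (G : WeightedGraph V) (s t : ℕ) (hs : 0 < s) (ht : 0 < t) (xi : V) :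
    wpeb G (unitDist (s * t) xi)
      = wpeb (G.extend xi s hs) (unitDist t (none : Option V)) :=
  weighted_st_pebbling_eq_extended_general G s t hs xi
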